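/- Let A ∈ ℝ^{m×n} with m ≥ n, let x ∈ ℝⁿ satisfy Ax = b, and let ε > 0. Let E ∈ ℝ^{m×n} with ‖E‖₂ < ε/2 and e ∈ ℝ^m. Let σ̂_k ≥ ε ≥ σ̂_{k+1}, where σ̂_j are the singular values of A+E in descending order, and let x̂_k = (A+E)_k^† (b+e). Then the residual satisfies ‖A x̂_k − b‖₂ ≤ 5ε‖x‖₂ + (3/2)‖e‖₂. -/

import Mathlib

open Finset
open scoped RealInnerProductSpace

/-!
Write `B = A + E` and `w = e - E x`, so that `b + e = B x + w`. On the kept singular directions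
the truncated solve recovers the components of `x` exactly and adds `s_i⁻¹ ⟪u_i, w⟫ v_i`, so
`‖x̂‖ ≤ ‖x‖ + ‖w‖ / ε`; the residual `B x̂ - B x` has components `⟪u_i, w⟫` on the kept
directions and `-s_i ⟪v_i, x⟫` on the discarded ones, so `‖B x̂ - B x‖ ≤ ‖w‖ + ε ‖x‖`.
Passing back from `B` to `A` costs `‖E‖ (‖x‖ + ‖x̂‖)`, and `‖E‖ < ε / 2` closes the estimate.
-/

section Orthonormal

variable {ι E F G : Type*} [Fintype ι]
  [NormedAddCommGroup E] [InnerProductSpace ℝ E]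
  [NormedAddCommGroup F] [InnerProductSpace ℝ F]
  [NormedAddCommGroup G] [InnerProductSpace ℝ G]

theorem Orthonormal.norm_sum_smul_sq {f : ι → E} (hf : Orthonormal ℝ f) (c : ι → ℝ) :
    ‖∑ i, c i • f i‖ ^ 2 = ∑ i, c i ^ 2 := by
  rw [← real_inner_self_eq_norm_sq, sum_inner]
  simp only [real_inner_smul_left, hf.inner_right_fintype, sq]

theorem Orthonormal.sum_inner_sq_le {f : ι → E} (hf : Orthonormal ℝ f) (y : E) :
    ∑ i, ⟪f i, y⟫ ^ 2 ≤ ‖y‖ ^ 2 := by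
  simpa [Real.norm_eq_abs, sq_abs] using hf.sum_inner_products_le (s := univ) y

theorem Orthonormal.norm_sum_smul_le {f : ι → E} {g : ι → F} {h : ι → G}
    (hf : Orthonormal ℝ f) (hg : Orthonormal ℝ g) (hh : Orthonormal ℝ h)
    {a b : ℝ} (ha : 0 ≤ a) (hb : 0 ≤ b) (y : F) (z : G) {c : ι → ℝ}
    (hc : ∀ i, c i ^ 2 ≤ a ^ 2 * ⟪g i, y⟫ ^ 2 + b ^ 2 * ⟪h i, z⟫ ^ 2) :
    ‖∑ i, c i • f i‖ ≤ a * ‖y‖ + b * ‖z‖ := by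
  have hsq : ‖∑ i, c i • f i‖ ^ 2 ≤ (a * ‖y‖) ^ 2 + (b * ‖z‖) ^ 2 :=
    calc ‖∑ i, c i • f i‖ ^ 2 = ∑ i, c i ^ 2 := hf.norm_sum_smul_sq c
      _ ≤ a ^ 2 * ∑ i, ⟪g i, y⟫ ^ 2 + b ^ 2 * ∑ i, ⟪h i, z⟫ ^ 2 := by
        simpa only [mul_sum, ← sum_add_distrib] using sum_le_sum fun i _ => hc i
      _ ≤ (a * ‖y‖) ^ 2 + (b * ‖z‖) ^ 2 := by
        rw [mul_pow, mul_pow]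
        gcongr
        exacts [hg.sum_inner_sq_le y, hh.sum_inner_sq_le z]
  have hay : 0 ≤ a * ‖y‖ := by positivity
  have hbz : 0 ≤ b * ‖z‖ := by positivity
  nlinarith [norm_nonneg (∑ i, c i • f i)]

theorem Orthonormal.norm_sum_smul_le_of_sq_le {f : ι → E} {g : ι → F}
    (hf : Orthonormal ℝ f) (hg : Orthonormal ℝ g) {a : ℝ} (ha : 0 ≤ a) (y : F) {c : ι → ℝ}
    (hc : ∀ i, c i ^ 2 ≤ a ^ 2 * ⟪g i, y⟫ ^ 2) :
    ‖∑ i, c i • f i‖ ≤ a * ‖y‖ := by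
  simpa using hf.norm_sum_smul_le hg hg ha le_rfl y 0 (b := 0) fun i => by simpa using hc i

end Orthonormal

section TruncatedSVD

variable {ι H K : Type*} [Fintype ι]
  [NormedAddCommGroup H] [InnerProductSpace ℝ H]
  [NormedAddCommGroup K] [InnerProductSpace ℝ K]

noncomputable def truncatedSVDPinv (u : ι → K) (v : ι → H) (s : ι → ℝ) (p : ι → Prop)
    [DecidablePred p] (z : K) : H :=
  ∑ i, (if p i then (s i)⁻¹ * ⟪u i, z⟫ else 0) • v i

variable {u : ι → K} {v : ι → H} {s : ι → ℝ} {p : ι → Prop} [DecidablePred p] {B : H → K}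

theorem inner_apply_of_svd (hu : Orthonormal ℝ u) (hB : ∀ y, B y = ∑ i, (s i * ⟪v i, y⟫) • u i)
    (i : ι) (y : H) : ⟪u i, B y⟫ = s i * ⟪v i, y⟫ := by
  rw [hB, hu.inner_right_fintype]

theorem truncatedSVDPinv_apply_add (hu : Orthonormal ℝ u)
    (hB : ∀ y, B y = ∑ i, (s i * ⟪v i, y⟫) • u i) (hs : ∀ i, p i → s i ≠ 0) (x : H) (w : K) :
    truncatedSVDPinv u v s p (B x + w) =
      ∑ i, (if p i then ⟪v i, x⟫ else 0) • v i + truncatedSVDPinv u v s p w := by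
  rw [truncatedSVDPinv, truncatedSVDPinv, ← sum_add_distrib]
  refine sum_congr rfl fun i _ => ?_
  split_ifs with hi
  · rw [← add_smul, inner_add_right, inner_apply_of_svd hu hB, mul_add,
      inv_mul_cancel_left₀ (hs i hi)]
  · simp

theorem apply_truncatedSVDPinv_sub (hu : Orthonormal ℝ u) (hv : Orthonormal ℝ v)
    (hB : ∀ y, B y = ∑ i, (s i * ⟪v i, y⟫) • u i) (hs : ∀ i, p i → s i ≠ 0) (x : H) (w : K) :
    B (truncatedSVDPinv u v s p (B x + w)) - B x =
      ∑ i, (if p i then ⟪u i, w⟫ else -(s i * ⟪v i, x⟫)) • u i := by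
  rw [hB (truncatedSVDPinv u v s p _), hB x, ← sum_sub_distrib]
  refine sum_congr rfl fun i _ => ?_
  rw [← sub_smul, truncatedSVDPinv, hv.inner_right_fintype]
  congr 1
  split_ifs with hi
  · rw [inner_add_right, hu.inner_right_fintype, mul_inv_cancel_left₀ (hs i hi)]
    ring
  · ring

variable {ε : ℝ}

theorem norm_truncatedSVDPinv_le (hu : Orthonormal ℝ u) (hv : Orthonormal ℝ v) (hε : 0 < ε)
    (hkept : ∀ i, p i → ε ≤ s i) (w : K) :
    ‖truncatedSVDPinv u v s p w‖ ≤ ε⁻¹ * ‖w‖ := by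
  refine hv.norm_sum_smul_le_of_sq_le hu (inv_nonneg.2 hε.le) w fun i => ?_
  split_ifs with hi
  · have hsi := hkept i hi
    rw [mul_pow]
    gcongr
    exact inv_nonneg.2 (hε.le.trans hsi)
  · rw [zero_pow two_ne_zero]
    positivity

theorem norm_truncatedSVDPinv_apply_add_le (hu : Orthonormal ℝ u) (hv : Orthonormal ℝ v)
    (hB : ∀ y, B y = ∑ i, (s i * ⟪v i, y⟫) • u i) (hε : 0 < ε) (hkept : ∀ i, p i → ε ≤ s i)
    (x : H) (w : K) :
    ‖truncatedSVDPinv u v s p (B x + w)‖ ≤ ‖x‖ + ε⁻¹ * ‖w‖ := by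
  have hs : ∀ i, p i → s i ≠ 0 := fun i hi => (hε.trans_le (hkept i hi)).ne'
  rw [truncatedSVDPinv_apply_add hu hB hs]
  refine (norm_add_le _ _).trans (add_le_add ?_ (norm_truncatedSVDPinv_le hu hv hε hkept w))
  simpa using hv.norm_sum_smul_le_of_sq_le hv zero_le_one x
    (c := fun i => if p i then ⟪v i, x⟫ else 0) fun i => by split_ifs <;> simp [sq_nonneg]

theorem norm_apply_truncatedSVDPinv_sub_le (hu : Orthonormal ℝ u) (hv : Orthonormal ℝ v)
    (hB : ∀ y, B y = ∑ i, (s i * ⟪v i, y⟫) • u i) (hε : 0 < ε) (hkept : ∀ i, p i → ε ≤ s i)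
    (hdropped : ∀ i, ¬p i → |s i| ≤ ε) (x : H) (w : K) :
    ‖B (truncatedSVDPinv u v s p (B x + w)) - B x‖ ≤ ‖w‖ + ε * ‖x‖ := by
  have hs : ∀ i, p i → s i ≠ 0 := fun i hi => (hε.trans_le (hkept i hi)).ne'
  rw [apply_truncatedSVDPinv_sub hu hv hB hs]
  simpa using hu.norm_sum_smul_le hu hv zero_le_one hε.le w x
    (c := fun i => if p i then ⟪u i, w⟫ else -(s i * ⟪v i, x⟫)) fun i => by
    split_ifs with hi
    · rw [one_pow, one_mul]
      exact le_add_of_nonneg_right (by positivity)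
    · rw [neg_sq, mul_pow, one_pow, one_mul]
      have hsε := abs_le.1 (hdropped i hi)
      exact le_add_of_nonneg_of_le (sq_nonneg _)
        (mul_le_mul_of_nonneg_right (sq_le_sq' hsε.1 hsε.2) (sq_nonneg _))

end TruncatedSVD

theorem ContinuousLinearMap.norm_apply_sub_apply_le_of_add {𝕜 X Y : Type*} [NontriviallyNormedField 𝕜]
    [SeminormedAddCommGroup X] [NormedSpace 𝕜 X] [SeminormedAddCommGroup Y] [NormedSpace 𝕜 Y]
    (A E : X →L[𝕜] Y) (x y : X) :
    ‖A y - A x‖ ≤ ‖(A + E) y - (A + E) x‖ + ‖E‖ * ‖x‖ + ‖E‖ * ‖y‖ := by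
  have hsplit : A y - A x = ((A + E) y - (A + E) x) + E x - E y := by
    simp only [add_apply]
    abel
  rw [hsplit]
  refine (norm_sub_le _ _).trans ?_
  gcongr
  · exact (norm_add_le _ _).trans (by gcongr; exact E.le_opNorm x)
  · exact E.le_opNorm y

theorem tsvd_residual_bound_general
    (m n k : ℕ) (ε : ℝ) (hε : 0 < ε)
    (A E : EuclideanSpace ℝ (Fin n) →L[ℝ] EuclideanSpace ℝ (Fin m))
    (u : Fin n → EuclideanSpace ℝ (Fin m)) (v : Fin n → EuclideanSpace ℝ (Fin n))
    (hu : Orthonormal ℝ u) (hv : Orthonormal ℝ v)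
    (s : Fin n → ℝ) (hs0 : ∀ i, 0 ≤ s i)
    (hsvd : ∀ y, (A + E) y = ∑ i : Fin n, (s i * ⟪v i, y⟫) • u i)
    (hE : ‖E‖ < ε / 2)
    (hε1 : ∀ i : Fin n, (i : ℕ) < k → ε ≤ s i)
    (hε2 : ∀ i : Fin n, k ≤ (i : ℕ) → s i ≤ ε)
    (x : EuclideanSpace ℝ (Fin n)) (b e : EuclideanSpace ℝ (Fin m))
    (hAx : A x = b)
    (pinv : EuclideanSpace ℝ (Fin m) →L[ℝ] EuclideanSpace ℝ (Fin n))
    (hpinv : ∀ z, pinv z =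
      ∑ i : Fin n, (if (i : ℕ) < k then (s i)⁻¹ * ⟪u i, z⟫ else 0) • v i)
    (xhat : EuclideanSpace ℝ (Fin n)) (hxhat : xhat = pinv (b + e)) :
    ‖A xhat - b‖ ≤ 5 * ε * ‖x‖ + 3 / 2 * ‖e‖ := by
  set w := e - E x with hw_def
  have hbe : b + e = (A + E) x + w := by
    rw [hw_def, add_apply, hAx]
    abel
  have hxhat_eq : xhat = truncatedSVDPinv u v s (fun i => (i : ℕ) < k) ((A + E) x + w) := by
    rw [hxhat, hpinv, hbe, truncatedSVDPinv]
  have hdropped : ∀ i : Fin n, ¬(i : ℕ) < k → |s i| ≤ ε := fun i hi =>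
    abs_le.2 ⟨by linarith [hs0 i], hε2 i (not_lt.1 hi)⟩
  have hBres : ‖(A + E) xhat - (A + E) x‖ ≤ ‖w‖ + ε * ‖x‖ := by
    rw [hxhat_eq]
    exact norm_apply_truncatedSVDPinv_sub_le hu hv hsvd hε hε1 hdropped x w
  have hxhat_le : ‖xhat‖ ≤ ‖x‖ + ε⁻¹ * ‖w‖ := by
    rw [hxhat_eq]
    exact norm_truncatedSVDPinv_apply_add_le hu hv hsvd hε hε1 x w
  have hw : ‖w‖ ≤ ‖e‖ + ε / 2 * ‖x‖ :=
    (norm_sub_le e (E x)).trans (by gcongr; exact E.le_of_opNorm_le hE.le x)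
  have hres := A.norm_apply_sub_apply_le_of_add E x xhat
  rw [hAx] at hres
  have hεxhat : ε / 2 * ‖xhat‖ ≤ ε / 2 * ‖x‖ + ‖w‖ / 2 := by
    calc ε / 2 * ‖xhat‖ ≤ ε / 2 * (‖x‖ + ε⁻¹ * ‖w‖) := by gcongr
      _ = ε / 2 * ‖x‖ + ‖w‖ / 2 := by field_simp
  have hEx : ‖E‖ * ‖x‖ ≤ ε / 2 * ‖x‖ := by gcongr
  have hExhat : ‖E‖ * ‖xhat‖ ≤ ε / 2 * ‖xhat‖ := by gcongr
  linarith [mul_nonneg hε.le (norm_nonneg x)]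

/-- bound on the residual of the solution obtained from the truncated SVD of
a perturbed linear system.  The SVD of `A + E` is given by orthonormal families `u`, `v`
and singular values `s` in descending order; the pseudo-inverse of the `k`-truncated SVD
keeps only the `k` largest singular values. -/
theorem tsvd_residual_bound
    (m n k : ℕ) (hmn : n ≤ m) (hk1 : 1 ≤ k) (hkn : k ≤ n) (ε : ℝ) (hε : 0 < ε)
    (A E : EuclideanSpace ℝ (Fin n) →L[ℝ] EuclideanSpace ℝ (Fin m))
    (u : Fin n → EuclideanSpace ℝ (Fin m)) (v : Fin n → EuclideanSpace ℝ (Fin n))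
    (hu : Orthonormal ℝ u) (hv : Orthonormal ℝ v)
    (s : Fin n → ℝ) (hs : Antitone s) (hs0 : ∀ i, 0 ≤ s i)
    (hsvd : ∀ y, (A + E) y = ∑ i : Fin n, (s i * ⟪v i, y⟫) • u i)
    (hE : ‖E‖ < ε / 2)
    (hε1 : ∀ i : Fin n, (i : ℕ) < k → ε ≤ s i)
    (hε2 : ∀ i : Fin n, k ≤ (i : ℕ) → s i ≤ ε)
    (x : EuclideanSpace ℝ (Fin n)) (b e : EuclideanSpace ℝ (Fin m))
    (hAx : A x = b)
    (pinv : EuclideanSpace ℝ (Fin m) →L[ℝ] EuclideanSpace ℝ (Fin n))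
    (hpinv : ∀ z, pinv z =
      ∑ i : Fin n, (if (i : ℕ) < k then (s i)⁻¹ * ⟪u i, z⟫ else 0) • v i)
    (xhat : EuclideanSpace ℝ (Fin n)) (hxhat : xhat = pinv (b + e)) :
    ‖A xhat - b‖ ≤ 5 * ε * ‖x‖ + 3 / 2 * ‖e‖ :=
  tsvd_residual_bound_general m n k ε hε A E u v hu hv s hs0 hsvd hE hε1 hε2 x b e hAx pinv hpinv
    xhat hxhat
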